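/- arXiv:2605.25700 — 2 statements merged into one kernel-verified Lean document; each statement's English description precedes it below -/
import Mathlib

section
/- There exists a finite probability space with random variables $X$ (state), $Y^1, Y^2$ (observations) such that $Y^1 = h^1(X, Z^1)$ and $Y^2 = h^2(X, Z^2)$ for measurable functions $h^1, h^2$ and noises $Z^1, Z^2$ independent of each other and of $X$, for which $Y^2$ is NOT conditionally independent of $X$ given $Y^1$; i.e., there exist values $x, y^1, y^2$ with $p(X = x, Y^1 = y^1) > 0$ such that $p(Y^2 = y^2 \mid X = x, Y^1 = y^1) \neq p(Y^2 = y^2 \mid Y^1 = y^1)$. -/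
open Finset
open scoped Classical BigOperators

/-- Probability of an event on a finite space with pmf `p`. -/
noncomputable def pr {Ω : Type*} [Fintype Ω] (p : Ω → ℝ) (E : Ω → Prop) : ℝ :=
  ∑ ω, if E ω then p ω else 0

/-- Conditional probability `p(E | F)` as a ratio (zero when `pr p F = 0`). -/
noncomputable def cpr {Ω : Type*} [Fintype Ω] (p : Ω → ℝ) (E F : Ω → Prop) : ℝ :=
  pr p (fun ω => E ω ∧ F ω) / pr p F

/-!
Let `X` and `Z¹` be independent fair bits, let `Z²` be trivial, and observe `Y¹ = Z¹` and
`Y² = X`. The first observation carries no information about `X`, so given `Y¹ = 1` the event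
`Y² = 1` still has probability `1/2`; given also `X = 1` it is certain.
-/

lemma pr_true {Ω : Type*} [Fintype Ω] (p : Ω → ℝ) : pr p (fun _ => True) = ∑ ω, p ω := by
  simp [pr]

lemma cpr_self_and {Ω : Type*} [Fintype Ω] (p : Ω → ℝ) (E F : Ω → Prop)
    (h : pr p (fun ω => E ω ∧ F ω) ≠ 0) : cpr p E (fun ω => E ω ∧ F ω) = 1 := by
  simp only [cpr, and_self_left]
  exact div_self h

def prodPmf {α β : Type*} (f : α → ℝ) (g : β → ℝ) : α × β → ℝ := fun ω => f ω.1 * g ω.2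

section ProdPmf

variable {α β : Type*} [Fintype α] [Fintype β] (f : α → ℝ) (g : β → ℝ)

lemma pr_prodPmf (A : α → Prop) (B : β → Prop) :
    pr (prodPmf f g) (fun ω => A ω.1 ∧ B ω.2) = pr f A * pr g B := by
  simp only [pr, prodPmf, Fintype.sum_prod_type, Finset.sum_mul_sum, ite_zero_mul_ite_zero]

lemma sum_prodPmf : ∑ ω, prodPmf f g ω = (∑ a, f a) * ∑ b, g b := by
  simpa [pr_true] using pr_prodPmf f g (fun _ => True) (fun _ => True)

lemma pr_prodPmf_fst (hg : ∑ b, g b = 1) (A : α → Prop) :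
    pr (prodPmf f g) (fun ω => A ω.1) = pr f A := by
  simpa [pr_true, hg] using pr_prodPmf f g A (fun _ => True)

lemma pr_prodPmf_snd (hf : ∑ a, f a = 1) (B : β → Prop) :
    pr (prodPmf f g) (fun ω => B ω.2) = pr g B := by
  simpa [pr_true, hf] using pr_prodPmf f g (fun _ => True) B

lemma cpr_prodPmf_fst_snd (hf : ∑ a, f a = 1) (A : α → Prop) (B : β → Prop)
    (hB : pr g B ≠ 0) :
    cpr (prodPmf f g) (fun ω => A ω.1) (fun ω => B ω.2) = pr f A := by
  rw [cpr, pr_prodPmf, pr_prodPmf_snd f g hf, mul_div_cancel_right₀ _ hB]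

end ProdPmf

noncomputable def fairCoin : Bool → ℝ := fun _ => 1 / 2

lemma sum_fairCoin : ∑ b, fairCoin b = 1 := by
  norm_num [fairCoin]

lemma pr_fairCoin_eq (b : Bool) : pr fairCoin (· = b) = 1 / 2 := by
  cases b <;> norm_num [pr, fairCoin]

/-- Counterexample: two noisy observations `Y¹ = h¹(X,Z¹)`, `Y² = h²(X,Z²)` of a hidden
state, with `X, Z¹, Z²` mutually independent, need not be conditionally independent:
there are values with `p(Y²=y² | X=x, Y¹=y¹) ≠ p(Y²=y² | Y¹=y¹)`. -/
theorem stmt2 :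
    ∃ (Ω 𝒳 𝒴₁ 𝒴₂ 𝒵₁ 𝒵₂ : Type) (instΩ : Fintype Ω)
      (_ : Fintype 𝒳) (_ : Fintype 𝒴₁) (_ : Fintype 𝒴₂) (_ : Fintype 𝒵₁) (_ : Fintype 𝒵₂)
      (p : Ω → ℝ) (X : Ω → 𝒳) (Z₁ : Ω → 𝒵₁) (Z₂ : Ω → 𝒵₂)
      (h₁ : 𝒳 → 𝒵₁ → 𝒴₁) (h₂ : 𝒳 → 𝒵₂ → 𝒴₂),
      (∀ ω, 0 ≤ p ω) ∧
      (∑ ω ∈ @Finset.univ Ω instΩ, p ω) = 1 ∧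
      -- X, Z₁, Z₂ mutually independent
      (∀ (x : 𝒳) (z₁ : 𝒵₁) (z₂ : 𝒵₂),
        @pr Ω instΩ p (fun ω => X ω = x ∧ Z₁ ω = z₁ ∧ Z₂ ω = z₂) =
          @pr Ω instΩ p (fun ω => X ω = x) * @pr Ω instΩ p (fun ω => Z₁ ω = z₁) *
            @pr Ω instΩ p (fun ω => Z₂ ω = z₂)) ∧
      -- X takes at least two values with positive probability
      (∃ x x' : 𝒳, x ≠ x' ∧ 0 < @pr Ω instΩ p (fun ω => X ω = x) ∧
        0 < @pr Ω instΩ p (fun ω => X ω = x')) ∧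
      -- failure of conditional independence of Y² and X given Y¹
      (∃ (x : 𝒳) (y₁ : 𝒴₁) (y₂ : 𝒴₂),
        0 < @pr Ω instΩ p (fun ω => X ω = x ∧ h₁ (X ω) (Z₁ ω) = y₁) ∧
        @cpr Ω instΩ p (fun ω => h₂ (X ω) (Z₂ ω) = y₂)
            (fun ω => X ω = x ∧ h₁ (X ω) (Z₁ ω) = y₁) ≠
          @cpr Ω instΩ p (fun ω => h₂ (X ω) (Z₂ ω) = y₂)
            (fun ω => h₁ (X ω) (Z₁ ω) = y₁)) := by
  have hp_sum : ∑ ω, prodPmf fairCoin fairCoin ω = 1 := by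
    rw [sum_prodPmf, sum_fairCoin, one_mul]
  have hp_pair : pr (prodPmf fairCoin fairCoin) (fun ω => ω.1 = true ∧ ω.2 = true) = 1 / 4 := by
    rw [pr_prodPmf fairCoin fairCoin (· = true) (· = true), pr_fairCoin_eq]
    norm_num
  refine ⟨Bool × Bool, Bool, Bool, Bool, Bool, Unit, inferInstance, inferInstance,
    inferInstance, inferInstance, inferInstance, inferInstance,
    prodPmf fairCoin fairCoin, Prod.fst, Prod.snd, fun _ => (), fun _ z => z, fun x _ => x,
    fun ω => by norm_num [prodPmf, fairCoin], hp_sum, ?independent, ?twoValues, ?dependent⟩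
  case independent =>
    rintro x z₁ ⟨⟩
    simp only [and_true, pr_true, hp_sum, mul_one]
    rw [pr_prodPmf fairCoin fairCoin (· = x) (· = z₁),
      pr_prodPmf_fst fairCoin fairCoin sum_fairCoin (· = x),
      pr_prodPmf_snd fairCoin fairCoin sum_fairCoin (· = z₁)]
  case twoValues =>
    refine ⟨true, false, by decide, ?_, ?_⟩ <;>
      · rw [pr_prodPmf_fst fairCoin fairCoin sum_fairCoin (· = _), pr_fairCoin_eq]
        norm_num
  case dependent =>
    refine ⟨true, true, true, by norm_num [hp_pair], ?_⟩
    rw [cpr_self_and _ _ _ (by norm_num [hp_pair]),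
      cpr_prodPmf_fst_snd fairCoin fairCoin sum_fairCoin (· = true) (· = true)
        (by norm_num [pr_fairCoin_eq]), pr_fairCoin_eq]
    norm_num
end

section
/- Let $\mathcal{X}, \mathcal{Y}, \mathcal{U}$ be finite sets, and consider a controlled hidden Markov model with joint law $p(x_0, y_0, x_1, y_1) = \mu(x_0) Q_0(y_0 \mid x_0) S(x_1 \mid x_0, g(y_0)) Q_1(y_1 \mid x_1)$, where the control is $u_0 = g(y_0)$ for a strategy $g : \mathcal{Y} \to \mathcal{U}$. Then for any two strategies $g, g'$ with $g(y_0) = g'(y_0)$ at a fixed realization $y_0$ with positive probability, the posteriors agree: $p^{g}(X_1 = x_1 \mid Y_0 = y_0, Y_1 = y_1) = p^{g'}(X_1 = x_1 \mid Y_0 = y_0, Y_1 = y_1)$ for all $x_1$ and all $y_1$ with positive probability under both. That is, the posterior depends on the strategy only through the realized action $u_0 = g(y_0)$. -/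
open Finset
open scoped Classical BigOperators

section Conditioning

variable {Ω : Type*} [Fintype Ω] {p q : Ω → ℝ}

theorem pr_congr_of_eq_on {E F : Ω → Prop} (hEF : ∀ ω, E ω → F ω)
    (hpq : ∀ ω, F ω → p ω = q ω) : pr p E = pr q E :=
  Finset.sum_congr rfl fun ω _ => by
    split_ifs with hE
    · exact hpq ω (hEF ω hE)
    · rfl

theorem cpr_congr_of_eq_on (E : Ω → Prop) {F : Ω → Prop}
    (hpq : ∀ ω, F ω → p ω = q ω) : cpr p E F = cpr q E F := by
  unfold cpr
  rw [pr_congr_of_eq_on (fun _ h => h.2) hpq, pr_congr_of_eq_on (fun _ h => h) hpq]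

end Conditioning

theorem stmt7_general {𝒳 𝒴 𝒰 : Type*} [Fintype 𝒳] [Fintype 𝒴]
    (μ : 𝒳 → ℝ)
    (Q₀ Q₁ : 𝒳 → 𝒴 → ℝ)
    (S : 𝒳 → 𝒳 → 𝒰 → ℝ)   -- S x₁ x₀ u = S(x₁ | x₀, u)
    -- joint laws induced by strategies g and g'
    (g g' : 𝒴 → 𝒰)
    (pg pg' : 𝒳 × 𝒴 × 𝒳 × 𝒴 → ℝ)
    (hpg : ∀ x₀ y₀ x₁ y₁,
      pg (x₀, y₀, x₁, y₁) = μ x₀ * Q₀ x₀ y₀ * S x₁ x₀ (g y₀) * Q₁ x₁ y₁)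
    (hpg' : ∀ x₀ y₀ x₁ y₁,
      pg' (x₀, y₀, x₁, y₁) = μ x₀ * Q₀ x₀ y₀ * S x₁ x₀ (g' y₀) * Q₁ x₁ y₁)
    (y₀ : 𝒴)
    (hagree : g y₀ = g' y₀) :
    ∀ (x₁ : 𝒳) (y₁ : 𝒴),
      0 < pr pg (fun ω => ω.2.1 = y₀ ∧ ω.2.2.2 = y₁) →
      0 < pr pg' (fun ω => ω.2.1 = y₀ ∧ ω.2.2.2 = y₁) →
      cpr pg (fun ω => ω.2.2.1 = x₁) (fun ω => ω.2.1 = y₀ ∧ ω.2.2.2 = y₁) =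
        cpr pg' (fun ω => ω.2.2.1 = x₁) (fun ω => ω.2.1 = y₀ ∧ ω.2.2.2 = y₁) := by
  have laws_agree_on_slice : ∀ ω : 𝒳 × 𝒴 × 𝒳 × 𝒴, ω.2.1 = y₀ → pg ω = pg' ω := by
    rintro ⟨x₀, _, x₁, y₁⟩ rfl
    rw [hpg, hpg', hagree]
  intro _ _ _ _
  exact cpr_congr_of_eq_on _ fun ω h => laws_agree_on_slice ω h.1

/-- In a controlled hidden Markov model with control `u₀ = g(y₀)`, the posterior of
`X₁` given `(Y₀, Y₁)` depends on the strategy `g` only through the realized action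
`g(y₀)`: two strategies agreeing at `y₀` induce the same posterior. -/
theorem stmt7 {𝒳 𝒴 𝒰 : Type*} [Fintype 𝒳] [Fintype 𝒴] [Fintype 𝒰]
    (μ : 𝒳 → ℝ) (hμ0 : ∀ x, 0 ≤ μ x) (hμ1 : ∑ x, μ x = 1)
    (Q₀ Q₁ : 𝒳 → 𝒴 → ℝ)
    (hQ₀0 : ∀ x y, 0 ≤ Q₀ x y) (hQ₀1 : ∀ x, ∑ y, Q₀ x y = 1)
    (hQ₁0 : ∀ x y, 0 ≤ Q₁ x y) (hQ₁1 : ∀ x, ∑ y, Q₁ x y = 1)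
    (S : 𝒳 → 𝒳 → 𝒰 → ℝ)   -- S x₁ x₀ u = S(x₁ | x₀, u)
    (hS0 : ∀ x' x u, 0 ≤ S x' x u) (hS1 : ∀ x u, ∑ x', S x' x u = 1)
    -- joint laws induced by strategies g and g'
    (g g' : 𝒴 → 𝒰)
    (pg pg' : 𝒳 × 𝒴 × 𝒳 × 𝒴 → ℝ)
    (hpg : ∀ x₀ y₀ x₁ y₁,
      pg (x₀, y₀, x₁, y₁) = μ x₀ * Q₀ x₀ y₀ * S x₁ x₀ (g y₀) * Q₁ x₁ y₁)
    (hpg' : ∀ x₀ y₀ x₁ y₁,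
      pg' (x₀, y₀, x₁, y₁) = μ x₀ * Q₀ x₀ y₀ * S x₁ x₀ (g' y₀) * Q₁ x₁ y₁)
    (y₀ : 𝒴)
    (hagree : g y₀ = g' y₀)
    (hy₀ : 0 < pr pg (fun ω => ω.2.1 = y₀)) :
    ∀ (x₁ : 𝒳) (y₁ : 𝒴),
      0 < pr pg (fun ω => ω.2.1 = y₀ ∧ ω.2.2.2 = y₁) →
      0 < pr pg' (fun ω => ω.2.1 = y₀ ∧ ω.2.2.2 = y₁) →
      cpr pg (fun ω => ω.2.2.1 = x₁) (fun ω => ω.2.1 = y₀ ∧ ω.2.2.2 = y₁) =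
        cpr pg' (fun ω => ω.2.2.1 = x₁) (fun ω => ω.2.1 = y₀ ∧ ω.2.2.2 = y₁) :=
  stmt7_general μ Q₀ Q₁ S g g' pg pg' hpg hpg' y₀ hagree
end
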